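/- arXiv:2209.04740 — 2 statements merged into one kernel-verified Lean document; each statement's English description precedes it below -/
import Mathlib

section
/- Let d ≥ 1 and let U_d ⊆ {0,1}^d be the configuration consisting of the single vertex (0,...,0) of Q_d. Then λ(U_d,d) ≥ ((2^d − 1)/2^d)^(2^d − 1). -/
open Filter

namespace CubeDensity

/-- The automorphism of `Q_d` given by permuting coordinates by `σ` and then
complementing the values in the coordinates where `ε` is `true`. -/
def autMap (d : ℕ) (σ : Equiv.Perm (Fin d)) (ε : Fin d → Bool) (v : Fin d → Bool) :
    Fin d → Bool :=
  fun i => xor (v (σ⁻¹ i)) (ε i)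

/-- `K` is an exact copy of `H` in `Q_d`: some automorphism of `Q_d` maps `H` onto `K`. -/
def ExactCopy (d : ℕ) (H K : Set (Fin d → Bool)) : Prop :=
  ∃ σ : Equiv.Perm (Fin d), ∃ ε : Fin d → Bool, autMap d σ ε '' H = K

/-- The vertex of `Q_n` in the sub-`d`-cube with flip coordinates `F` (and fixed values `g`
outside `F`) corresponding to the vertex `u` of `Q_d`, identifying the flip coordinates
with `Fin d` in increasing order. -/
def embed {n d : ℕ} (F : Finset (Fin n)) (hF : F.card = d) (g : Fin n → Bool)
    (u : Fin d → Bool) : Fin n → Bool :=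
  fun i => if h : i ∈ F then u ((F.orderIsoOfFin hF).symm ⟨i, h⟩) else g i

/-- The sub-`d`-cube of `Q_n` with flip coordinates `F` and fixed values `g` outside `F`
is `H`-good for `S`: the configuration induced by `S` on it is an exact copy of `H`. -/
def IsGood {n d : ℕ} (H : Set (Fin d → Bool)) (S : Set (Fin n → Bool))
    (F : Finset (Fin n)) (hF : F.card = d) (g : Fin n → Bool) : Prop :=
  ExactCopy d H {u : Fin d → Bool | embed F hF g u ∈ S}

/-- The number of `H`-good sub-`d`-cubes of `Q_n`, where a sub-`d`-cube is encoded as a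
pair `(F, g)` with `F` the `d`-element set of flip coordinates and `g` the fixed values
outside `F` (normalized to be `false` on `F`). -/
noncomputable def goodCount (d : ℕ) (H : Set (Fin d → Bool)) (n : ℕ)
    (S : Set (Fin n → Bool)) : ℕ :=
  Nat.card {p : Finset (Fin n) × (Fin n → Bool) //
    ∃ hF : p.1.card = d, (∀ i ∈ p.1, p.2 i = false) ∧ IsGood H S p.1 hF p.2}

/-- `g(H,d,n,S)`: the fraction of the `C(n,d) * 2^(n-d)` sub-`d`-cubes of `Q_n` that are
`H`-good for `S`. -/
noncomputable def gFrac (d : ℕ) (H : Set (Fin d → Bool)) (n : ℕ)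
    (S : Set (Fin n → Bool)) : ℝ :=
  (goodCount d H n S : ℝ) / ((n.choose d : ℝ) * 2 ^ (n - d))

/-- `ex(H,d,n)`: the maximum over all `S ⊆ {0,1}^n` of the fraction of `H`-good
sub-`d`-cubes. -/
noncomputable def exD (d : ℕ) (H : Set (Fin d → Bool)) (n : ℕ) : ℝ :=
  ⨆ S : Set (Fin n → Bool), gFrac d H n S

end CubeDensity

/-!
Every sub-`d`-cube of `Q_{n+1}` lies in exactly `n + 1 - d` of the `2(n + 1)` facets
`x_j = b` of `Q_{n+1}`, each a copy of `Q_n`; averaging over the facets gives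
`ex(H,d,n+1) ≤ ex(H,d,n)` for `n ≥ d`, so the limit exists and is the infimum.

For the bound, colour the vertices of `Q_n` uniformly at random with the `2^d` vertices of
`Q_d` and let `S` be the vertices of a fixed colour `w`. A given sub-`d`-cube meets `S` in
exactly one vertex with probability `2^d · 2^{-d} (1 - 2^{-d})^{2^d - 1}`, so some colouring
makes at least this fraction of the sub-`d`-cubes good.
-/

namespace CubeDensity

open Finset
open scoped Classical

theorem _root_.Finset.orderEmbOfFin_map {α β : Type*} [LinearOrder α] [LinearOrder β]
    (f : α ↪ β) (hf : StrictMono f) (s : Finset α) {k : ℕ} (h : (s.map f).card = k)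
    (i : Fin k) : (s.map f).orderEmbOfFin h i = f (s.orderEmbOfFin (by simpa using h) i) :=
  congrFun (orderEmbOfFin_unique h (fun _ => mem_map_of_mem _ (orderEmbOfFin_mem _ _ _))
    (hf.comp (orderEmbOfFin _ _).strictMono)).symm i

variable {d n : ℕ}

section Embed

variable (F : Finset (Fin n)) (hF : F.card = d) (g : Fin n → Bool) (u : Fin d → Bool)

theorem embed_orderEmbOfFin (k : Fin d) : embed F hF g u (F.orderEmbOfFin hF k) = u k := by
  have hk : (⟨F.orderEmbOfFin hF k, orderEmbOfFin_mem F hF k⟩ : F) = F.orderIsoOfFin hF k := rfl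
  rw [embed, dif_pos (orderEmbOfFin_mem F hF k), hk, OrderIso.symm_apply_apply]

theorem embed_of_notMem {i : Fin n} (hi : i ∉ F) : embed F hF g u i = g i :=
  dif_neg hi

theorem embed_injective : Function.Injective (embed F hF g) := fun u v huv =>
  funext fun k => by rw [← embed_orderEmbOfFin F hF g u, ← embed_orderEmbOfFin F hF g v, huv]

theorem insertNth_embed (j : Fin (n + 1)) (b : Bool) (hF' : (F.map j.succAboveEmb).card = d) :
    Fin.insertNth (α := fun _ => Bool) j b (embed F hF g u) =
      embed (F.map j.succAboveEmb) hF' (Fin.insertNth j b g) u := by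
  funext i
  rcases eq_or_ne i j with rfl | hij
  · rw [embed_of_notMem _ _ _ _ (by simp [Fin.succAbove_ne]), Fin.insertNth_apply_same,
      Fin.insertNth_apply_same]
  obtain ⟨k, rfl⟩ := Fin.exists_succAbove_eq hij
  rw [Fin.insertNth_apply_succAbove]
  by_cases hk : k ∈ F
  · obtain ⟨m, rfl⟩ : k ∈ Set.range (F.orderEmbOfFin hF) := by rwa [range_orderEmbOfFin]
    rw [embed_orderEmbOfFin, ← Fin.coe_succAboveEmb,
      ← orderEmbOfFin_map _ (Fin.strictMono_succAbove j) F hF', embed_orderEmbOfFin]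
  · rw [embed_of_notMem _ _ _ _ hk, embed_of_notMem _ _ _ _ (by simpa using hk),
      Fin.insertNth_apply_succAbove]

end Embed

noncomputable def subcubes (n d : ℕ) : Finset (Finset (Fin n) × (Fin n → Bool)) :=
  {p | p.1.card = d ∧ ∀ i ∈ p.1, p.2 i = false}

noncomputable def goodSubcubes (d : ℕ) (H : Set (Fin d → Bool)) (S : Set (Fin n → Bool)) :
    Finset (Finset (Fin n) × (Fin n → Bool)) :=
  {p ∈ subcubes n d | ∃ hF : p.1.card = d, IsGood H S p.1 hF p.2}

theorem card_filter_forall_mem_eq_false (F : Finset (Fin n)) :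
    #{g : Fin n → Bool | ∀ i ∈ F, g i = false} = 2 ^ (n - F.card) := by
  have : ({g | ∀ i ∈ F, g i = false} : Finset (Fin n → Bool)) =
      Fintype.piFinset fun i => if i ∈ F then {false} else univ := by
    ext g; simp only [mem_filter, mem_univ, true_and, Fintype.mem_piFinset]
    refine forall_congr' fun i => ?_
    split_ifs with hi <;> simp [hi]
  rw [this, Fintype.card_piFinset]
  simp [apply_ite, prod_ite, filter_not, card_sdiff_of_subset]

theorem card_subcubes : #(subcubes n d) = n.choose d * 2 ^ (n - d) := by
  rw [card_eq_sum_card_fiberwise (f := Prod.fst) (t := powersetCard d univ)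
    fun p hp => by simpa [subcubes] using (mem_filter.1 hp).2.1]
  have hfiber : ∀ F ∈ powersetCard d univ, #{p ∈ subcubes n d | p.1 = F} = 2 ^ (n - d) := by
    intro F hF
    rw [← (mem_powersetCard_univ.1 hF), ← card_filter_forall_mem_eq_false F]
    refine card_nbij' Prod.snd (fun g => (F, g)) ?_ ?_ ?_ ?_ <;> intro p hp <;>
      simp_all [subcubes, Prod.ext_iff]
  rw [sum_congr rfl hfiber, sum_const, card_powersetCard, card_univ, Fintype.card_fin,
    smul_eq_mul]

theorem goodCount_eq_card (H : Set (Fin d → Bool)) (S : Set (Fin n → Bool)) :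
    goodCount d H n S = #(goodSubcubes d H S) := by
  rw [goodCount, Nat.card_eq_fintype_card, Fintype.card_subtype]
  congr 1
  ext p
  simp only [goodSubcubes, subcubes, mem_filter, mem_univ, true_and]
  exact ⟨fun ⟨hF, hg, h⟩ => ⟨⟨hF, hg⟩, hF, h⟩, fun ⟨⟨_, hg⟩, hF, h⟩ => ⟨hF, hg, h⟩⟩

theorem gFrac_eq (H : Set (Fin d → Bool)) (S : Set (Fin n → Bool)) :
    gFrac d H n S = #(goodSubcubes d H S) / #(subcubes n d) := by
  rw [gFrac, goodCount_eq_card, card_subcubes]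
  push_cast; rfl

theorem gFrac_le_exD (H : Set (Fin d → Bool)) (S : Set (Fin n → Bool)) :
    gFrac d H n S ≤ exD d H n :=
  le_ciSup (Set.finite_range _).bddAbove S

theorem exD_nonneg (H : Set (Fin d → Bool)) : 0 ≤ exD d H n :=
  (div_nonneg (Nat.cast_nonneg _) (by positivity)).trans (gFrac_le_exD H ∅)

theorem card_goodSubcubes_le (hdn : d ≤ n) (H : Set (Fin d → Bool)) (S : Set (Fin n → Bool)) :
    (#(goodSubcubes d H S) : ℝ) ≤ exD d H n * (n.choose d * 2 ^ (n - d)) := by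
  have := gFrac_le_exD H S
  rwa [gFrac, goodCount_eq_card, div_le_iff₀ (by have := Nat.choose_pos hdn; positivity)] at this

section Slice

variable (H : Set (Fin d → Bool)) (S : Set (Fin (n + 1) → Bool))

def slice (j : Fin (n + 1)) (b : Bool) : Set (Fin n → Bool) :=
  Fin.insertNth (α := fun _ => Bool) j b ⁻¹' S

theorem isGood_slice_iff (j : Fin (n + 1)) (b : Bool) (F : Finset (Fin n)) (hF : F.card = d)
    (g : Fin n → Bool) (hF' : (F.map j.succAboveEmb).card = d) :
    IsGood H (slice S j b) F hF g ↔
      IsGood H S (F.map j.succAboveEmb) hF' (Fin.insertNth j b g) := by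
  simp only [IsGood, slice, Set.mem_preimage, insertNth_embed F hF g _ j b hF']

theorem mem_goodSubcubes_slice_iff (j : Fin (n + 1)) (b : Bool) (F : Finset (Fin n))
    (g : Fin n → Bool) :
    (F, g) ∈ goodSubcubes d H (slice S j b) ↔
      (F.map j.succAboveEmb, Fin.insertNth j b g) ∈ goodSubcubes d H S := by
  simp only [goodSubcubes, subcubes, mem_filter, mem_univ, true_and, card_map, forall_mem_map,
    Fin.coe_succAboveEmb, Fin.insertNth_apply_succAbove]
  exact and_congr_right fun ⟨hF, _⟩ =>
    ⟨fun ⟨_, h⟩ => ⟨by simpa, (isGood_slice_iff H S j b F hF g _).1 h⟩,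
      fun ⟨_, h⟩ => ⟨hF, (isGood_slice_iff H S j b F hF g _).2 h⟩⟩

theorem map_succAboveEmb_preimage {j : Fin (n + 1)} {F : Finset (Fin (n + 1))} (hj : j ∉ F) :
    (F.preimage j.succAbove Fin.succAbove_right_injective.injOn).map j.succAboveEmb = F := by
  ext i
  simp only [Finset.mem_map, mem_preimage, Fin.coe_succAboveEmb]
  refine ⟨fun ⟨k, hk, hki⟩ => hki ▸ hk, fun hi => ?_⟩
  obtain ⟨k, rfl⟩ := Fin.exists_succAbove_eq (ne_of_mem_of_not_mem hi hj)
  exact ⟨k, hi, rfl⟩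

theorem sum_card_goodSubcubes_slice (j : Fin (n + 1)) :
    ∑ b, #(goodSubcubes d H (slice S j b)) = #{p ∈ goodSubcubes d H S | j ∉ p.1} := by
  rw [← card_sigma]
  refine card_nbij' (fun x => (x.2.1.map j.succAboveEmb, Fin.insertNth j x.1 x.2.2))
    (fun p => ⟨p.2 j, p.1.preimage j.succAbove Fin.succAbove_right_injective.injOn,
      j.removeNth p.2⟩) ?_ ?_ ?_ ?_
  · rintro ⟨b, F, g⟩ h
    simp only [coe_sigma, Set.mem_sigma_iff, mem_coe, mem_univ, true_and] at h
    simp [(mem_goodSubcubes_slice_iff H S j b F g).1 h, Fin.succAbove_ne]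
  · rintro ⟨F, g⟩ h
    rw [mem_coe, mem_filter] at h
    simp only [coe_sigma, Set.mem_sigma_iff, mem_coe, mem_univ, true_and,
      mem_goodSubcubes_slice_iff, map_succAboveEmb_preimage h.2, Fin.insertNth_self_removeNth, h.1]
  · rintro ⟨b, F, g⟩ -
    have : (F.map j.succAboveEmb).preimage j.succAbove
        Fin.succAbove_right_injective.injOn = F := by ext; simp
    simp [this]
  · rintro ⟨F, g⟩ h
    rw [mem_coe, mem_filter] at h
    simp [map_succAboveEmb_preimage h.2]

theorem sum_sum_card_goodSubcubes_slice :
    ∑ j, ∑ b, #(goodSubcubes d H (slice S j b)) = (n + 1 - d) * #(goodSubcubes d H S) := by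
  simp_rw [sum_card_goodSubcubes_slice]
  refine (sum_card_bipartiteAbove_eq_sum_card_bipartiteBelow
    (fun (j : Fin (n + 1)) (p : Finset (Fin (n + 1)) × _) => j ∉ p.1)).trans ?_
  rw [mul_comm, ← smul_eq_mul, ← sum_const]
  refine sum_congr rfl fun p hp => ?_
  rw [bipartiteBelow, filter_not, filter_mem_eq_inter, univ_inter, card_univ_sdiff,
    Fintype.card_fin, (mem_filter.1 hp).2.1]

end Slice

theorem exD_succ_le (hdn : d ≤ n) (H : Set (Fin d → Bool)) : exD d H (n + 1) ≤ exD d H n := by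
  refine ciSup_le fun S => ?_
  have hdn' : d ≤ n + 1 := hdn.trans n.le_succ
  have hpos : (0 : ℝ) < n + 1 - d := by
    have : (d : ℝ) ≤ n := by exact_mod_cast hdn
    linarith
  have hC := Nat.choose_pos hdn'
  rw [gFrac, goodCount_eq_card, div_le_iff₀ (by positivity)]
  refine le_of_mul_le_mul_left ?_ hpos
  calc ((n : ℝ) + 1 - d) * #(goodSubcubes d H S)
      = ∑ j, ∑ b, (#(goodSubcubes d H (slice S j b)) : ℝ) := by
        have h := congrArg (Nat.cast : ℕ → ℝ) (sum_sum_card_goodSubcubes_slice H S)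
        push_cast [hdn'] at h
        exact h.symm
    _ ≤ ∑ _j : Fin (n + 1), ∑ _b : Bool, exD d H n * (n.choose d * 2 ^ (n - d)) :=
        sum_le_sum fun j _ => sum_le_sum fun b _ => card_goodSubcubes_le hdn H _
    _ = (n + 1 - d) * (exD d H n * ((n + 1).choose d * 2 ^ (n + 1 - d))) := by
        have hchoose : ((n.choose d * (n + 1) : ℕ) : ℝ) = ((n + 1).choose d * (n + 1 - d) : ℕ) :=
          congrArg _ (Nat.choose_mul_succ_eq n d)
        rw [Nat.sub_add_comm hdn, pow_succ]
        push_cast [hdn'] at hchoose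
        simp only [sum_const, card_univ, Fintype.card_fin, Fintype.card_bool, nsmul_eq_mul]
        push_cast
        linear_combination (2 * exD d H n * 2 ^ (n - d)) * hchoose

theorem tendsto_exD (H : Set (Fin d → Bool)) :
    Tendsto (exD d H) atTop (nhds (⨅ k, exD d H (k + d))) := by
  refine (tendsto_add_atTop_iff_nat d).1 (tendsto_atTop_ciInf ?_ ⟨0, ?_⟩)
  · exact antitone_nat_of_succ_le fun k => by
      simpa [Nat.succ_add] using exD_succ_le (Nat.le_add_left d k) H
  · rintro _ ⟨k, rfl⟩
    exact exD_nonneg H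

section Counting

variable {α β W : Type*} [Fintype α] [Fintype β] [Fintype W]

theorem card_filter_forall_eq_iff (a : α) (w : W) :
    #{f : α → W | ∀ b, f b = w ↔ b = a} = (Fintype.card W - 1) ^ (Fintype.card α - 1) := by
  have : ({f | ∀ b, f b = w ↔ b = a} : Finset (α → W)) =
      Fintype.piFinset fun b => if b = a then {w} else {w}ᶜ := by
    ext f
    simp only [mem_filter, mem_univ, true_and, Fintype.mem_piFinset]
    refine forall_congr' fun b => ?_
    split_ifs with hb <;> simp [hb]
  rw [this, Fintype.card_piFinset]
  simp [apply_ite, prod_ite, filter_ne', card_compl]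

theorem card_filter_existsUnique_eq (w : W) :
    #{f : α → W | ∃! a, f a = w} =
      Fintype.card α * (Fintype.card W - 1) ^ (Fintype.card α - 1) := by
  have : ({f | ∃! a, f a = w} : Finset (α → W)) =
      univ.biUnion fun a => {f | ∀ b, f b = w ↔ b = a} := by
    ext f
    simp only [mem_filter, mem_univ, true_and, mem_biUnion]
    exact ⟨fun ⟨a, ha, hu⟩ => ⟨a, fun b => ⟨hu b, fun h => h ▸ ha⟩⟩,
      fun ⟨a, h⟩ => ⟨a, (h a).2 rfl, fun b => (h b).1⟩⟩
  rw [this, card_biUnion]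
  · simp [card_filter_forall_eq_iff]
  · intro a _ a' _ hne
    refine disjoint_left.2 fun f hf hf' => hne ?_
    simp only [mem_filter, mem_univ, true_and] at hf hf'
    exact (hf' a).1 ((hf a).2 rfl)

theorem card_filter_comp_injective {e : α → β} (he : Function.Injective e)
    (P : (α → W) → Prop) :
    #{h : β → W | P (h ∘ e)} =
      #{f : α → W | P f} * Fintype.card W ^ (Fintype.card β - Fintype.card α) := by
  let E : (β → W) ≃ (α → W) × ({b // b ∉ Set.range e} → W) :=
    (Equiv.piEquivPiSubtypeProd (· ∈ Set.range e) fun _ => W).trans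
      (Equiv.prodCongr ((Equiv.ofInjective e he).arrowCongr (Equiv.refl W)).symm (Equiv.refl _))
  have hE : ∀ h, (E h).1 = h ∘ e := fun h => rfl
  rw [← Fintype.card_subtype, ← Fintype.card_subtype,
    Fintype.card_congr ((E.subtypeEquiv fun h => by rw [hE]).trans
      Equiv.prodSubtypeFstEquivSubtypeProd), Fintype.card_prod, Fintype.card_fun,
    Fintype.card_subtype_compl, Set.card_range_of_injective he]

end Counting

section SingleVertex

variable (w : Fin d → Bool)

theorem exactCopy_singleton_iff (K : Set (Fin d → Bool)) : ExactCopy d {w} K ↔ ∃! a, a ∈ K := by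
  simp only [ExactCopy, Set.image_singleton]
  constructor
  · rintro ⟨σ, ε, rfl⟩
    exact ⟨_, rfl, fun _ => id⟩
  · rintro ⟨a, ha, hu⟩
    refine ⟨1, fun i => xor (w i) (a i), ?_⟩
    have : autMap d 1 (fun i => xor (w i) (a i)) w = a := by funext i; simp [autMap]
    rw [this, eq_comm, Set.eq_singleton_iff_unique_mem]
    exact ⟨ha, hu⟩

theorem card_isGood_preimage (F : Finset (Fin n)) (hF : F.card = d) (g : Fin n → Bool) :
    #{c : (Fin n → Bool) → Fin d → Bool | IsGood {w} (c ⁻¹' {w}) F hF g} =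
      2 ^ d * (2 ^ d - 1) ^ (2 ^ d - 1) * (2 ^ d) ^ (2 ^ n - 2 ^ d) := by
  have h := card_filter_comp_injective (W := Fin d → Bool) (embed_injective F hF g)
    fun f => ∃! u, f u = w
  rw [card_filter_existsUnique_eq] at h
  simp only [Fintype.card_fun, Fintype.card_bool, Fintype.card_fin] at h
  rw [← h]
  congr 1
  ext c
  simp only [mem_filter, mem_univ, true_and, IsGood, exactCopy_singleton_iff]
  rfl

theorem sum_card_goodSubcubes_preimage :
    ∑ c : (Fin n → Bool) → Fin d → Bool, #(goodSubcubes d {w} (c ⁻¹' {w})) =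
      #(subcubes n d) * (2 ^ d * (2 ^ d - 1) ^ (2 ^ d - 1) * (2 ^ d) ^ (2 ^ n - 2 ^ d)) := by
  refine (sum_card_bipartiteAbove_eq_sum_card_bipartiteBelow
    (fun (c : (Fin n → Bool) → Fin d → Bool) (p : Finset (Fin n) × (Fin n → Bool)) =>
      ∃ hF : p.1.card = d, IsGood {w} (c ⁻¹' {w}) p.1 hF p.2)).trans ?_
  rw [← smul_eq_mul, ← sum_const]
  refine sum_congr rfl fun p hp => ?_
  obtain ⟨hF, -⟩ := (mem_filter.1 hp).2
  rw [bipartiteBelow, ← card_isGood_preimage w p.1 hF p.2]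
  simp [hF]

theorem natCast_mul_pow_mul_pow_eq {N M : ℕ} (hN : 1 ≤ N) (hNM : N ≤ M) :
    ((N * (N - 1) ^ (N - 1) * N ^ (M - N) : ℕ) : ℝ) = (((N : ℝ) - 1) / N) ^ (N - 1) * N ^ M := by
  obtain ⟨m, rfl⟩ := Nat.exists_eq_add_of_le' hN
  obtain ⟨k, rfl⟩ := Nat.exists_eq_add_of_le hNM
  simp only [Nat.add_sub_cancel, Nat.add_sub_cancel_left]
  push_cast
  rw [add_sub_cancel_right, div_pow, pow_add, pow_succ]
  field_simp

theorem le_exD_singleton (hdn : d ≤ n) :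
    (((2 : ℝ) ^ d - 1) / 2 ^ d) ^ (2 ^ d - 1) ≤ exD d {w} n := by
  have hD : (0 : ℝ) < #(subcubes n d) := by
    have := Nat.choose_pos hdn
    rw [card_subcubes]
    positivity
  have hmean : ∑ _c : (Fin n → Bool) → Fin d → Bool, (((2 : ℝ) ^ d - 1) / 2 ^ d) ^ (2 ^ d - 1) =
      ∑ c : (Fin n → Bool) → Fin d → Bool, gFrac d {w} n (c ⁻¹' {w}) := by
    simp only [gFrac_eq, ← sum_div, ← Nat.cast_sum, sum_card_goodSubcubes_preimage, sum_const,
      card_univ, Fintype.card_fun, Fintype.card_bool, Fintype.card_fin, nsmul_eq_mul]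
    rw [Nat.cast_mul, mul_div_cancel_left₀ _ hD.ne', natCast_mul_pow_mul_pow_eq Nat.one_le_two_pow
      (Nat.pow_le_pow_right two_pos hdn)]
    push_cast
    ring
  obtain ⟨c, -, hc⟩ := exists_le_of_sum_le univ_nonempty hmean.le
  exact hc.trans (gFrac_le_exD _ _)

end SingleVertex

end CubeDensity

theorem dCubeDensity_single_vertex_ge_random_general (d : ℕ) :
    ∃ L : ℝ,
      Filter.Tendsto
        (fun n => CubeDensity.exD d ({fun _ => false} : Set (Fin d → Bool)) n)
        Filter.atTop (nhds L) ∧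
      (((2 : ℝ) ^ d - 1) / 2 ^ d) ^ (2 ^ d - 1) ≤ L :=
  ⟨_, CubeDensity.tendsto_exD _,
    le_ciInf fun k => CubeDensity.le_exD_singleton _ (Nat.le_add_left d k)⟩

/-- λ(U_d, d) ≥ ((2^d − 1)/2^d)^(2^d − 1), where U_d is a single vertex of Q_d. -/
theorem dCubeDensity_single_vertex_ge_random (d : ℕ) (hd : 1 ≤ d) :
    ∃ L : ℝ,
      Filter.Tendsto
        (fun n => CubeDensity.exD d ({fun _ => false} : Set (Fin d → Bool)) n)
        Filter.atTop (nhds L) ∧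
      (((2 : ℝ) ^ d - 1) / 2 ^ d) ^ (2 ^ d - 1) ≤ L :=
  dCubeDensity_single_vertex_ge_random_general d
end

section
/- Let G be a simple graph and let uv be an edge of G. Define the auxiliary graph F on vertex set V(G) \ {u,v} in which distinct vertices x and y are adjacent if and only if the 4-element set {u,v,x,y} induces a subgraph of G isomorphic to K_{2,2}. Then F is triangle-free. -/
/-!
In an induced `K_{2,2}` containing the edge `uv`, exactly one of the two remaining vertices is
adjacent to `u`. So colouring each vertex `x` of the auxiliary graph by whether `x` is adjacent
to `u` is a proper 2-colouring: the auxiliary graph is bipartite, hence triangle-free.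
-/

/-- Given a graph `G` and an edge `uv`, the auxiliary graph on `V(G) \ {u,v}` in which
`x` and `y` are adjacent iff `{u,v,x,y}` induces a copy of `K_{2,2}` in `G`. -/
def auxGraph {V : Type} (G : SimpleGraph V) (u v : V) :
    SimpleGraph {x : V // x ≠ u ∧ x ≠ v} :=
  SimpleGraph.fromRel (fun x y =>
    Nonempty (G.induce ({u, v, x.1, y.1} : Set V) ≃g completeBipartiteGraph (Fin 2) (Fin 2)))

namespace SimpleGraph

theorem completeBipartiteGraph_fin_two_adj_xor (a b c d : Fin 2 ⊕ Fin 2)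
    (hab : a ≠ b) (hac : a ≠ c) (had : a ≠ d) (hbc : b ≠ c) (hbd : b ≠ d) (hcd : c ≠ d)
    (h : (completeBipartiteGraph (Fin 2) (Fin 2)).Adj a b) :
    Xor ((completeBipartiteGraph (Fin 2) (Fin 2)).Adj a c)
      ((completeBipartiteGraph (Fin 2) (Fin 2)).Adj a d) := by
  rcases a with a | a <;> rcases b with b | b <;> rcases c with c | c <;> rcases d with d | d <;>
    simp_all [xor_def] <;> omega

theorem xor_adj_of_induce_iso_completeBipartiteGraph {V : Type} (G : SimpleGraph V)
    {u v x y : V} (huv : G.Adj u v) (hxu : x ≠ u) (hxv : x ≠ v) (hyu : y ≠ u) (hyv : y ≠ v)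
    (hxy : x ≠ y)
    (e : G.induce ({u, v, x, y} : Set V) ≃g completeBipartiteGraph (Fin 2) (Fin 2)) :
    Xor (G.Adj u x) (G.Adj u y) := by
  let p : ({u, v, x, y} : Set V) := ⟨u, by simp⟩
  let q : ({u, v, x, y} : Set V) := ⟨v, by simp⟩
  let r : ({u, v, x, y} : Set V) := ⟨x, by simp⟩
  let s : ({u, v, x, y} : Set V) := ⟨y, by simp⟩
  have hne {a b : ({u, v, x, y} : Set V)} (hab : a.1 ≠ b.1) : e a ≠ e b :=
    e.injective.ne (ne_of_apply_ne Subtype.val hab)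
  have key := completeBipartiteGraph_fin_two_adj_xor (e p) (e q) (e r) (e s)
    (hne huv.ne) (hne hxu.symm) (hne hyu.symm) (hne hxv.symm) (hne hyv.symm) (hne hxy)
    (e.map_adj_iff (v := p) (w := q) |>.mpr huv)
  simpa only [e.map_adj_iff, comap_adj, Function.Embedding.coe_subtype] using key

theorem xor_adj_of_auxGraph_adj {V : Type} {G : SimpleGraph V} {u v : V} (huv : G.Adj u v)
    {x y : {x : V // x ≠ u ∧ x ≠ v}} (h : (auxGraph G u v).Adj x y) :
    Xor (G.Adj u x) (G.Adj u y) := by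
  obtain ⟨hne, ⟨⟨e⟩⟩ | ⟨⟨e⟩⟩⟩ := h
  · exact G.xor_adj_of_induce_iso_completeBipartiteGraph huv x.2.1 x.2.2 y.2.1 y.2.2
      (Subtype.coe_injective.ne hne) e
  · exact (G.xor_adj_of_induce_iso_completeBipartiteGraph huv y.2.1 y.2.2 x.2.1 x.2.2
      (Subtype.coe_injective.ne hne.symm) e).symm

theorem auxGraph_isBipartite {V : Type} {G : SimpleGraph V} {u v : V} (huv : G.Adj u v) :
    (auxGraph G u v).IsBipartite := by
  let C : (auxGraph G u v).Coloring Prop := Coloring.mk (fun x => G.Adj u x) fun h heq =>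
    (xor_iff_not_iff _ _).mp (xor_adj_of_auxGraph_adj huv h) (heq ▸ Iff.rfl)
  simpa only [Fintype.card_prop] using C.colorable

end SimpleGraph

/-- If `uv` is an edge of `G`, then the auxiliary graph whose edges are the pairs `{x,y}`
such that `{u,v,x,y}` induces `K_{2,2}` in `G` is triangle-free. -/
theorem auxGraph_triangleFree {V : Type} (G : SimpleGraph V) (u v : V) (huv : G.Adj u v) :
    (auxGraph G u v).CliqueFree 3 :=
  (SimpleGraph.auxGraph_isBipartite huv).cliqueFree (by norm_num)
end
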